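/- In the four-agent example economy with preference profile ≻_I, every individually rational allocation p satisfies p_{i,o_1} + p_{i,o_2} = 1/2 and p_{i,o_3} + p_{i,o_4} = 1/2 for every agent i. -/

import Mathlib

open Finset

open Classical in
/-- The total amount that assignment `x` allocates to objects weakly preferred
(under strict preference `pr`) to object `o`. -/
noncomputable def upperSum {n : ℕ} (pr : Fin n → Fin n → Prop) (x : Fin n → ℝ) (o : Fin n) : ℝ :=
  ∑ o' ∈ Finset.univ, if pr o' o ∨ o' = o then x o' else 0

/-- `p` weakly (first-order) stochastically dominates `q` with respect to `pr`. -/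
def SdDom {n : ℕ} (pr : Fin n → Fin n → Prop) (p q : Fin n → ℝ) : Prop :=
  ∀ o, upperSum pr q o ≤ upperSum pr p o

/-- `p` strictly (first-order) stochastically dominates `q` with respect to `pr`. -/
def SdStrict {n : ℕ} (pr : Fin n → Fin n → Prop) (p q : Fin n → ℝ) : Prop :=
  SdDom pr p q ∧ ∃ o, upperSum pr q o < upperSum pr p o

/-- A housing market economy with fractional endowments: `n` agents, `n` objects,
each agent has a strict (linear order) preference over objects and the endowment
matrix is doubly stochastic. -/
structure Economy (n : ℕ) where
  pref : Fin n → Fin n → Fin n → Prop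
  pref_irrefl : ∀ i o, ¬ pref i o o
  pref_trans : ∀ i o₁ o₂ o₃, pref i o₁ o₂ → pref i o₂ o₃ → pref i o₁ o₃
  pref_total : ∀ i o o', o ≠ o' → pref i o o' ∨ pref i o' o
  endow : Fin n → Fin n → ℝ
  endow_nonneg : ∀ i o, 0 ≤ endow i o
  endow_row : ∀ i, ∑ o, endow i o = 1
  endow_col : ∀ o, ∑ i, endow i o = 1

/-- An allocation is a doubly stochastic matrix. -/
def IsAllocation {n : ℕ} (p : Fin n → Fin n → ℝ) : Prop :=
  (∀ i o, 0 ≤ p i o ∧ p i o ≤ 1) ∧ (∀ i, ∑ o, p i o = 1) ∧ (∀ o, ∑ i, p i o = 1)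

/-- Individual rationality. -/
def IR {n : ℕ} (E : Economy n) (p : Fin n → Fin n → ℝ) : Prop :=
  ∀ i, SdDom (E.pref i) (p i) (E.endow i)

/-- Coalition `I'` weakly blocks allocation `p` via allocation `p'`. -/
def WeaklyBlocks {n : ℕ} (E : Economy n) (I' : Finset (Fin n))
    (p p' : Fin n → Fin n → ℝ) : Prop :=
  (∀ o, ∑ i ∈ I', p' i o = ∑ i ∈ I', E.endow i o) ∧
  (∀ i ∈ I', SdDom (E.pref i) (p' i) (p i)) ∧
  (∃ j ∈ I', SdStrict (E.pref j) (p' j) (p j))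

/-- Coalition `I'` strongly blocks allocation `p` via allocation `p'`. -/
def StronglyBlocks {n : ℕ} (E : Economy n) (I' : Finset (Fin n))
    (p p' : Fin n → Fin n → ℝ) : Prop :=
  (∀ o, ∑ i ∈ I', p' i o = ∑ i ∈ I', E.endow i o) ∧
  (∀ i ∈ I', SdStrict (E.pref i) (p' i) (p i))

/-- The strong core: IR allocations not weakly blocked by any non-singleton coalition. -/
def InStrongCore {n : ℕ} (E : Economy n) (p : Fin n → Fin n → ℝ) : Prop :=
  IsAllocation p ∧ IR E p ∧
    ¬ ∃ (I' : Finset (Fin n)) (p' : Fin n → Fin n → ℝ),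
        1 < I'.card ∧ IsAllocation p' ∧ WeaklyBlocks E I' p p'

/-- The weak core: IR allocations not strongly blocked by any non-singleton coalition. -/
def InWeakCore {n : ℕ} (E : Economy n) (p : Fin n → Fin n → ℝ) : Prop :=
  IsAllocation p ∧ IR E p ∧
    ¬ ∃ (I' : Finset (Fin n)) (p' : Fin n → Fin n → ℝ),
        1 < I'.card ∧ IsAllocation p' ∧ StronglyBlocks E I' p p'

/-- Equal treatment of equals. -/
def ETE {n : ℕ} (E : Economy n) (p : Fin n → Fin n → ℝ) : Prop :=
  ∀ i j, E.endow i = E.endow j → E.pref i = E.pref j → p i = p j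

/-- Equal-endowment no envy. -/
def EENE {n : ℕ} (E : Economy n) (p : Fin n → Fin n → ℝ) : Prop :=
  ∀ i j, E.endow i = E.endow j →
    SdDom (E.pref i) (p i) (p j) ∧ SdDom (E.pref j) (p j) (p i)

/-- Endowments of the four-agent example economy:
agents 1 and 2 each own 1/2 of o1 and 1/2 of o3;
agents 3 and 4 each own 1/2 of o2 and 1/2 of o4. -/
noncomputable def endowEx : Fin 4 → Fin 4 → ℝ :=
  ![![1/2, 0, 1/2, 0], ![1/2, 0, 1/2, 0], ![0, 1/2, 0, 1/2], ![0, 1/2, 0, 1/2]]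

/-- Rankings encoding the preference profile ≻_I (lower rank = more preferred):
agent 1: o2 ≻ o1 ≻ o4 ≻ o3; agent 2: o2 ≻ o1 ≻ o4 ≻ o3;
agent 3: o1 ≻ o2 ≻ o3 ≻ o4; agent 4: o2 ≻ o1 ≻ o4 ≻ o3. -/
def rankA : Fin 4 → Fin 4 → ℕ :=
  ![![1, 0, 3, 2], ![1, 0, 3, 2], ![0, 1, 2, 3], ![1, 0, 3, 2]]

/-- The four-agent example economy with preference profile ≻_I. -/
noncomputable def economyA : Economy 4 where
  pref := fun i o o' => rankA i o < rankA i o'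
  pref_irrefl := fun _ _ => lt_irrefl _
  pref_trans := fun _ _ _ _ => Nat.lt_trans
  pref_total := by decide
  endow := endowEx
  endow_nonneg := by
    intro i o; fin_cases i <;> fin_cases o <;>
      norm_num [endowEx, Matrix.cons_val_zero, Matrix.cons_val_one, Matrix.head_cons,
        Matrix.cons_val_succ, Matrix.vecHead, Matrix.vecTail]
  endow_row := by
    intro i; fin_cases i <;>
      norm_num [endowEx, Fin.sum_univ_four, Matrix.cons_val_zero, Matrix.cons_val_one,
        Matrix.head_cons, Matrix.cons_val_succ, Matrix.vecHead, Matrix.vecTail] <;> simp <;> norm_num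
  endow_col := by
    intro o; fin_cases o <;>
      norm_num [endowEx, Fin.sum_univ_four, Matrix.cons_val_zero, Matrix.cons_val_one,
        Matrix.head_cons, Matrix.cons_val_succ, Matrix.vecHead, Matrix.vecTail] <;> simp <;> norm_num

/-- in the example economy with profile ≻_I, every IR allocation gives each
agent exactly 1/2 of {o1, o2} and 1/2 of {o3, o4}. -/
theorem ir_half_split_exampleA (p : Fin 4 → Fin 4 → ℝ)
    (hp : IsAllocation p) (hIR : IR economyA p) :
    ∀ i : Fin 4, p i 0 + p i 1 = 1 / 2 ∧ p i 2 + p i 3 = 1 / 2 := by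
  have h0 := hIR 0 0
  have h1 := hIR 1 0
  have h2 := hIR 2 1
  have h3 := hIR 3 0
  simp only [upperSum, economyA, rankA, endowEx, Fin.sum_univ_four] at h0 h1 h2 h3
  norm_num [Matrix.cons_val_zero, Matrix.cons_val_one, Matrix.head_cons, Matrix.cons_val_fin_one,
    Fin.isValue, show ((2:Fin 4)) = ⟨2,by norm_num⟩ from rfl,
    show ((3:Fin 4)) = ⟨3,by norm_num⟩ from rfl] at h0 h1 h2 h3
  norm_num [Matrix.vecHead, Matrix.vecTail, Fin.ext_iff,
    show ((3:Fin 4):ℕ) = 3 from rfl, show ((2:Fin 4):ℕ) = 2 from rfl] at h0 h1 h2 h3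
  simp at h0 h1 h2 h3
  have c0 := hp.2.2 0
  have c1 := hp.2.2 1
  rw [Fin.sum_univ_four] at c0 c1
  have r0 := hp.2.1 0
  have r1 := hp.2.1 1
  have r2 := hp.2.1 2
  have r3 := hp.2.1 3
  rw [Fin.sum_univ_four] at r0 r1 r2 r3
  intro i
  fin_cases i <;> refine ⟨?_, ?_⟩ <;> simp only [Fin.mk_zero, Fin.mk_one,
    show (⟨2, by norm_num⟩ : Fin 4) = 2 from rfl, show (⟨3, by norm_num⟩ : Fin 4) = 3 from rfl] <;>
    linarith
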